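/- Let F be monic of degree d over Z with discriminant D, p a prime not dividing D, and F(μ_1) ≡ 0 (mod p). For each k ≥ 1 let μ_k mod p^k be the unique residue class (given by Hensel's lemma) with F(μ_k) ≡ 0 (mod p^k) and μ_k ≡ μ_1 (mod p). Let P be the ideal of R = Z[X]/(F) corresponding to μ_1 mod p. Then for every k ≥ 1, the ideal P^k corresponds to μ_k mod p^k, i.e., P^k is the Z-span of {α^j − μ_k^j : 1 ≤ j ≤ d−1} ∪ {p^k}. -/

import Mathlib

/-!
The ideal `(m, α - μ)` only depends on `μ mod m`, so with `β = α - μ_k` we have `P = (p, β)`.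
Taylor expansion of `F(α) = 0` at `μ_k` gives `F'(μ_k) β ∈ (F(μ_k), β²) ⊆ (p^j, β) (p, β)` for
`j < k`; as `p β` lies there too and `p ∤ F'(μ_k)`, also `β` does, so
`(p^j, β) (p, β) = (p^(j+1), β)` and `P^k = (p^k, β)` by induction. Finally `rootSpan F d m μ` is the ideal `(m, α - μ)` itself:
reducing `g` modulo the monic `F` shows `g(α) ≡ g(μ)` modulo the span.
-/

/-- The ℤ-submodule of `ℤ[X]/(F)` spanned by `α^j - μ^j` for `1 ≤ j < d`
together with `m`, associated to a root `μ mod m` of `F`. -/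
noncomputable def rootSpan (F : Polynomial ℤ) (d : ℕ) (m μ : ℤ) : Submodule ℤ (AdjoinRoot F) :=
  Submodule.span ℤ
    ({(m : AdjoinRoot F)} ∪
      (fun j : ℕ => AdjoinRoot.root F ^ j - (μ : AdjoinRoot F) ^ j) '' Set.Ico 1 d)

open Polynomial

lemma Ideal.span_pair_sub_eq_of_dvd {A : Type*} [CommRing A] {m a b : A} (x : A)
    (h : m ∣ a - b) : Ideal.span {m, x - a} = Ideal.span {m, x - b} := by
  obtain ⟨t, ht⟩ := h
  rw [show x - a = x - b + (-t) * m by linear_combination -ht, Ideal.span_pair_add_mul_left]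

section Taylor

variable {R A : Type*} [CommRing R] [CommRing A] [Algebra R A] {f : R[X]} {α : A}

lemma algebraMap_eval_derivative_mul_mem_span (hf : aeval α f = 0) (ν : R) :
    algebraMap R A (f.derivative.eval ν) * (α - algebraMap R A ν) ∈
      Ideal.span {algebraMap R A (f.eval ν), (α - algebraMap R A ν) ^ 2} := by
  obtain ⟨c, hc⟩ := binomExpansion (f.map (algebraMap R A)) (algebraMap R A ν)
    (α - algebraMap R A ν)
  rw [add_sub_cancel, derivative_map] at hc
  simp only [eval_map_algebraMap, aeval_algebraMap_apply_eq_algebraMap_eval, hf] at hc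
  exact Ideal.mem_span_pair.2 ⟨-1, -c, by linear_combination hc⟩

lemma span_pair_pow_mul_span_pair (hf : aeval α f = 0) {p ν : R}
    (hcop : IsCoprime p (f.derivative.eval ν)) {n : ℕ} (hn : p ^ (n + 1) ∣ f.eval ν) :
    Ideal.span {algebraMap R A (p ^ n), α - algebraMap R A ν} *
        Ideal.span {algebraMap R A p, α - algebraMap R A ν} =
      Ideal.span {algebraMap R A (p ^ (n + 1)), α - algebraMap R A ν} := by
  set β := α - algebraMap R A ν
  have hpow : algebraMap R A (p ^ n) * algebraMap R A p = algebraMap R A (p ^ (n + 1)) := by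
    rw [← map_mul, pow_succ]
  rw [Ideal.span_pair_mul_span_pair, hpow]
  set I := Ideal.span {algebraMap R A (p ^ (n + 1)), algebraMap R A (p ^ n) * β,
    β * algebraMap R A p, β * β}
  apply le_antisymm
  · refine Ideal.span_le.2 ?_
    simp only [Set.insert_subset_iff, Set.singleton_subset_iff, SetLike.mem_coe]
    have hβ : β ∈ Ideal.span {algebraMap R A (p ^ (n + 1)), β} :=
      Ideal.subset_span (Set.mem_insert_of_mem _ rfl)
    exact ⟨Ideal.subset_span (Set.mem_insert _ _), Ideal.mul_mem_left _ _ hβ,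
      Ideal.mul_mem_right _ _ hβ, Ideal.mul_mem_right _ _ hβ⟩
  · have hpβ : algebraMap R A p * β ∈ I := by
      rw [mul_comm]; exact Ideal.subset_span (by simp)
    have hdβ : algebraMap R A (f.derivative.eval ν) * β ∈ I := by
      refine Ideal.span_le.2 ?_ (algebraMap_eval_derivative_mul_mem_span hf ν)
      obtain ⟨t, ht⟩ := hn
      simp only [Set.insert_subset_iff, Set.singleton_subset_iff, SetLike.mem_coe, ht, map_mul]
      refine ⟨Ideal.mul_mem_right _ _ (Ideal.subset_span (Set.mem_insert _ _)), ?_⟩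
      rw [sq]
      exact Ideal.subset_span
        (Set.mem_insert_of_mem _ (Set.mem_insert_of_mem _ (Set.mem_insert_of_mem _ rfl)))
    obtain ⟨u, v, huv⟩ := hcop
    have hβ : β = algebraMap R A u * (algebraMap R A p * β) +
        algebraMap R A v * (algebraMap R A (f.derivative.eval ν) * β) := by
      rw [← mul_assoc, ← mul_assoc, ← add_mul, ← map_mul, ← map_mul, ← map_add, huv, map_one,
        one_mul]
    refine Ideal.span_le.2 ?_
    simp only [Set.insert_subset_iff, Set.singleton_subset_iff, SetLike.mem_coe]
    refine ⟨Ideal.subset_span (Set.mem_insert _ _), ?_⟩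
    rw [hβ]
    exact add_mem (Ideal.mul_mem_left _ _ hpβ) (Ideal.mul_mem_left _ _ hdβ)

lemma span_pair_pow (hf : aeval α f = 0) {p ν : R} (hcop : IsCoprime p (f.derivative.eval ν))
    {k : ℕ} (hk : p ^ k ∣ f.eval ν) :
    Ideal.span {algebraMap R A p, α - algebraMap R A ν} ^ k =
      Ideal.span {algebraMap R A (p ^ k), α - algebraMap R A ν} := by
  induction k with
  | zero =>
    rw [pow_zero, pow_zero, map_one, Ideal.one_eq_top, eq_comm, Ideal.eq_top_iff_one]
    exact Ideal.subset_span (Set.mem_insert _ _)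
  | succ n ih =>
    rw [pow_succ, ih (dvd_trans (pow_dvd_pow p n.le_succ) hk),
      span_pair_pow_mul_span_pair hf hcop hk]

end Taylor

section RootSpan

variable {F : ℤ[X]} {m μ : ℤ}

lemma intCast_mem_rootSpan (d : ℕ) : (m : AdjoinRoot F) ∈ rootSpan F d m μ :=
  Submodule.subset_span (Or.inl rfl)

lemma aeval_root_sub_eval_mem_rootSpan {d : ℕ} {g : ℤ[X]} (hg : g.degree < d) :
    aeval (AdjoinRoot.root F) g - ((g.eval μ : ℤ) : AdjoinRoot F) ∈ rootSpan F d m μ := by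
  rcases eq_or_ne g 0 with rfl | hg0
  · simp
  have hgd : g.natDegree < d := (natDegree_lt_iff_degree_lt hg0).2 hg
  rw [aeval_eq_sum_range' hgd, eval_eq_sum_range' hgd]
  push_cast
  rw [← Finset.sum_sub_distrib]
  refine Submodule.sum_mem _ fun i hi => ?_
  rw [zsmul_eq_mul, ← mul_sub, ← zsmul_eq_mul]
  refine Submodule.smul_mem _ _ ?_
  rcases Nat.eq_zero_or_pos i with rfl | hi0
  · simp
  · exact Submodule.subset_span (Or.inr ⟨i, ⟨hi0, Finset.mem_range.1 hi⟩, rfl⟩)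

lemma mk_sub_eval_mem_rootSpan (hF : F.Monic) (hm : m ∣ F.eval μ) (g : ℤ[X]) :
    AdjoinRoot.mk F g - ((g.eval μ : ℤ) : AdjoinRoot F) ∈ rootSpan F F.natDegree m μ := by
  obtain ⟨t, ht⟩ := hm
  have hr : aeval (AdjoinRoot.root F) (g %ₘ F) - (((g %ₘ F).eval μ : ℤ) : AdjoinRoot F) ∈
      rootSpan F F.natDegree m μ :=
    aeval_root_sub_eval_mem_rootSpan (degree_eq_natDegree hF.ne_zero ▸ degree_modByMonic_lt g hF)
  have hg : AdjoinRoot.mk F g - ((g.eval μ : ℤ) : AdjoinRoot F) =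
      (aeval (AdjoinRoot.root F) (g %ₘ F) - (((g %ₘ F).eval μ : ℤ) : AdjoinRoot F)) -
        (t * (g /ₘ F).eval μ) • (m : AdjoinRoot F) := by
    conv_lhs => rw [← modByMonic_add_div g F]
    rw [AdjoinRoot.aeval_eq, map_add, map_mul, AdjoinRoot.mk_self, eval_add, eval_mul, ht,
      zsmul_eq_mul]
    push_cast
    ring
  rw [hg]
  exact sub_mem hr (Submodule.smul_mem _ _ (intCast_mem_rootSpan _))

lemma rootSpan_eq_restrictScalars_span (hF : F.Monic) (hm : m ∣ F.eval μ) :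
    rootSpan F F.natDegree m μ =
      (Ideal.span {(m : AdjoinRoot F), AdjoinRoot.root F - μ}).restrictScalars ℤ := by
  have hcong := mk_sub_eval_mem_rootSpan hF hm
  apply le_antisymm
  · rw [rootSpan, Submodule.span_le]
    rintro _ (rfl | ⟨j, -, rfl⟩)
    · exact Ideal.subset_span (Set.mem_insert _ _)
    · obtain ⟨c, hc⟩ := sub_dvd_pow_sub_pow (AdjoinRoot.root F) (μ : AdjoinRoot F) j
      dsimp only
      rw [SetLike.mem_coe, Submodule.restrictScalars_mem, hc]
      exact Ideal.mul_mem_right c _ (Ideal.subset_span (Set.mem_insert_of_mem _ rfl))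
  · intro x hx
    obtain ⟨a, b, rfl⟩ := Ideal.mem_span_pair.1 ((Submodule.restrictScalars_mem _ _ _).1 hx)
    induction a using AdjoinRoot.induction_on with | ih g =>
    induction b using AdjoinRoot.induction_on with | ih h =>
    have hdecomp : AdjoinRoot.mk F g * m + AdjoinRoot.mk F h * (AdjoinRoot.root F - μ) =
        m • (AdjoinRoot.mk F g - ((g.eval μ : ℤ) : AdjoinRoot F)) + g.eval μ • (m : AdjoinRoot F) +
          ((AdjoinRoot.mk F (X * h) - (((X * h).eval μ : ℤ) : AdjoinRoot F)) -
            μ • (AdjoinRoot.mk F h - ((h.eval μ : ℤ) : AdjoinRoot F))) := by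
      simp only [map_mul, AdjoinRoot.mk_X, eval_mul, eval_X, zsmul_eq_mul]
      push_cast
      ring
    rw [hdecomp]
    exact add_mem
      (add_mem (Submodule.smul_mem _ _ (hcong g)) (Submodule.smul_mem _ _ (intCast_mem_rootSpan _)))
      (sub_mem (hcong _) (Submodule.smul_mem _ _ (hcong h)))

end RootSpan

theorem stmt11_general (d : ℕ) (F : Polynomial ℤ) (hF : F.Monic)
    (hdeg : F.natDegree = d)
    (p : ℕ) (hp : p.Prime) (μ1 : ℤ)
    (hroot : (p : ℤ) ∣ F.eval μ1)
    (hsep : ¬ (p : ℤ) ∣ F.derivative.eval μ1)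
    (μs : ℕ → ℤ)
    (hμs : ∀ k : ℕ, 1 ≤ k →
      ((p : ℤ) ^ k ∣ F.eval (μs k) ∧ μs k ≡ μ1 [ZMOD (p : ℤ)])) :
    ∀ k : ℕ, 1 ≤ k →
      (rootSpan F d (p : ℤ) μ1) ^ k = rootSpan F d ((p : ℤ) ^ k) (μs k) := by
  intro k hk
  subst hdeg
  obtain ⟨hFk, hμk⟩ := hμs k hk
  have hcop : IsCoprime (p : ℤ) (F.derivative.eval (μs k)) := by
    refine (Nat.prime_iff_prime_int.1 hp).coprime_iff_not_dvd.2 fun h => hsep ?_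
    simpa using dvd_add (dvd_trans hμk.dvd (sub_dvd_eval_sub _ _ F.derivative)) h
  have hdvd : ((p : ℤ) : AdjoinRoot F) ∣ (μ1 : AdjoinRoot F) - μs k := by
    exact_mod_cast map_dvd (Int.castRingHom (AdjoinRoot F)) hμk.dvd
  have hFα : aeval (AdjoinRoot.root F) F = 0 := by
    rw [AdjoinRoot.aeval_eq, AdjoinRoot.mk_self]
  rw [rootSpan_eq_restrictScalars_span hF hroot, rootSpan_eq_restrictScalars_span hF hFk,
    ← Submodule.restrictScalars_pow (by omega), Ideal.span_pair_sub_eq_of_dvd _ hdvd]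
  congr 1
  simpa only [algebraMap_int_eq, eq_intCast] using span_pair_pow hFα hcop hFk

/-- let `p` be a prime at which `F` is nondegenerate at the root
`μ₁ mod p` (i.e. `p ∤ F'(μ₁)`, which follows from `p` not dividing the
discriminant `D` of `F`), and let `μ_k mod p^k` be the Hensel lifts of
`μ₁ mod p`.  If `P` is the ideal corresponding to `μ₁ mod p`, then for every
`k ≥ 1` the ideal `P^k` is the ideal corresponding to `μ_k mod p^k`. -/
theorem stmt11 (d : ℕ) (hd : 2 ≤ d) (F : Polynomial ℤ) (hF : F.Monic)
    (hdeg : F.natDegree = d)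
    (p : ℕ) (hp : p.Prime) (μ1 : ℤ)
    (hroot : (p : ℤ) ∣ F.eval μ1)
    (hsep : ¬ (p : ℤ) ∣ F.derivative.eval μ1)
    (μs : ℕ → ℤ) (hμs1 : μs 1 = μ1)
    (hμs : ∀ k : ℕ, 1 ≤ k →
      ((p : ℤ) ^ k ∣ F.eval (μs k) ∧ μs k ≡ μ1 [ZMOD (p : ℤ)])) :
    ∀ k : ℕ, 1 ≤ k →
      (rootSpan F d (p : ℤ) μ1) ^ k = rootSpan F d ((p : ℤ) ^ k) (μs k) :=
  stmt11_general d F hF hdeg p hp μ1 hroot hsep μs hμs
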